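/- Let R be a commutative Noetherian local ring and p a prime ideal of R such that the local ring R_p is not a field. Then the nonfree locus of R/p equals V(p), the set of primes containing p. -/

import Mathlib

/-!
Both sides are contained in the support `V(Ann(R/p)) = V(p)` of `R/p`, since a zero module is
free. Conversely, if `(R/p)_q` is free for some `q ⊇ p`, it is a nonzero free `R_q`-module
killed by `p`, so `p` dies in `R_q` and hence in `R_p`; then `pR_p = 0` and `R_p` is a field.
-/

/-- The nonfree locus of a module: the set of primes `p` such that `M_p` is
not a free `R_p`-module. -/
def nonfreeLocus (R : Type) [CommRing R] (M : Type) [AddCommGroup M]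
    [Module R M] : Set (PrimeSpectrum R) :=
  { p | ¬ Module.Free (Localization.AtPrime p.asIdeal)
      (LocalizedModule p.asIdeal.primeCompl M) }

open PrimeSpectrum

theorem Module.support_quotient_ideal {R : Type*} [CommRing R] (I : Ideal R) :
    Module.support R (R ⧸ I) = zeroLocus I := by
  rw [Module.support_eq_zeroLocus, Ideal.annihilator_quotient]

theorem nonfreeLocus_subset_support {R : Type} [CommRing R] {M : Type} [AddCommGroup M]
    [Module R M] : nonfreeLocus R M ⊆ Module.support R M := fun _ hq ↦ by
  by_contra hs
  have := Module.notMem_support_iff.mp hs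
  exact hq inferInstance

section

variable {R M : Type*} [CommRing R] [AddCommGroup M] [Module R M] {S : Submonoid R}

theorem LocalizedModule.smul_eq_zero_of_mem_annihilator {a : R}
    (ha : a ∈ Module.annihilator R M) (x : LocalizedModule S M) : a • x = 0 := by
  induction x using LocalizedModule.induction_on with
  | h m s => rw [LocalizedModule.smul'_mk, Module.mem_annihilator.mp ha, LocalizedModule.zero_mk]

theorem LocalizedModule.annihilator_le_ker_algebraMap
    [FaithfulSMul (Localization S) (LocalizedModule S M)] :
    Module.annihilator R M ≤ RingHom.ker (algebraMap R (Localization S)) := fun a ha ↦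
  RingHom.mem_ker.mpr <| FaithfulSMul.eq_of_smul_eq_smul (α := LocalizedModule S M) fun x ↦ by
    rw [algebraMap_smul (Localization S) a x, smul_eq_zero_of_mem_annihilator ha, zero_smul]

end

section

variable {R : Type*} [CommRing R]

theorem Localization.AtPrime.ker_algebraMap_le_of_le {p q : Ideal R} [p.IsPrime] [q.IsPrime]
    (hpq : p ≤ q) :
    RingHom.ker (algebraMap R (Localization.AtPrime q)) ≤
      RingHom.ker (algebraMap R (Localization.AtPrime p)) := by
  intro a ha
  obtain ⟨⟨s, hs⟩, hsa⟩ := (IsLocalization.map_eq_zero_iff q.primeCompl _ a).mp ha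
  exact (IsLocalization.map_eq_zero_iff p.primeCompl _ a).mpr
    ⟨⟨s, fun h ↦ hs (hpq h)⟩, hsa⟩

theorem Localization.AtPrime.isField_iff_le_ker_algebraMap (p : Ideal R) [p.IsPrime] :
    IsField (Localization.AtPrime p) ↔
      p ≤ RingHom.ker (algebraMap R (Localization.AtPrime p)) := by
  rw [IsLocalRing.isField_iff_maximalIdeal_eq, ← Localization.AtPrime.map_eq_maximalIdeal,
    Ideal.map_eq_bot_iff_le_ker]

end

theorem nonfreeLocus_quotient_prime_eq_zeroLocus
    (R : Type) [CommRing R]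
    (p : PrimeSpectrum R)
    (hp : ¬ IsField (Localization.AtPrime p.asIdeal)) :
    nonfreeLocus R (R ⧸ p.asIdeal) =
      PrimeSpectrum.zeroLocus (p.asIdeal : Set R) := by
  rw [← Module.support_quotient_ideal]
  refine nonfreeLocus_subset_support.antisymm fun q hq hfree ↦ hp ?_
  have : Nontrivial (LocalizedModule q.asIdeal.primeCompl (R ⧸ p.asIdeal)) := hq
  have hpq : p.asIdeal ≤ q.asIdeal := by
    rwa [Module.support_quotient_ideal, mem_zeroLocus, SetLike.coe_subset_coe] at hq
  rw [Localization.AtPrime.isField_iff_le_ker_algebraMap]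
  calc p.asIdeal = Module.annihilator R (R ⧸ p.asIdeal) := Ideal.annihilator_quotient.symm
    _ ≤ RingHom.ker (algebraMap R (Localization.AtPrime q.asIdeal)) :=
      LocalizedModule.annihilator_le_ker_algebraMap
    _ ≤ _ := Localization.AtPrime.ker_algebraMap_le_of_le hpq
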